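/- Let H be the presented group defined in the context (arising from the union of the 4-point quartic degeneration and a plane, Theorem 3.6). Then H is isomorphic to the symmetric group S_5. (Consequently, in the paper's setting, the fundamental group of the Galois cover of such a surface is trivial.) -/

import Mathlib

/-!
The generator `g3` is redundant: the relation `g2 g1 g2⁻¹ = g4 g3 g4⁻¹` gives
`g3 = g4 g2 g1 g2 g4`, and since `g2² = e` the relation `[g2² g1 g2⁻², g4] = e` says that `g1`
and `g4` commute. So `H` is generated by the involutions `g1, g2, g4, g5`, which satisfy the
Coxeter relations of type `A₄`, and therefore `|H| ≤ 5!`. The transpositions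
`(1 2), (2 3), (1 4), (3 4), (4 5)` satisfy the relations of `H` and generate `S₅`, so the induced
surjection `H → S₅` is an isomorphism.

The bound `(n + 1)!` for involutions `s₀, …, s_{n-1}` with the type-`A` relations is the
classical coset enumeration: right multiplication by `s_i`, `i ≤ k`, permutes the `k + 2` sets
`⟨s₀, …, s_{k-1}⟩ · s_k s_{k-1} ⋯ s_j` (`j ≤ k + 1`), which therefore cover `⟨s₀, …, s_k⟩`.
-/

namespace Stmt10

/-- Generators: `i ↦ g(i+1)` for `i = 0,…,4`. -/
def g (i : Fin 5) : FreeGroup (Fin 5) := FreeGroup.of i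

/-- The braid relator `x y x (y x y)⁻¹`, i.e. `<x,y> = e`. -/
def braid (x y : FreeGroup (Fin 5)) : FreeGroup (Fin 5) := x * y * x * (y * x * y)⁻¹

/-- The commutator relator `x y x⁻¹ y⁻¹`, i.e. `[x,y] = e`. -/
def comm (x y : FreeGroup (Fin 5)) : FreeGroup (Fin 5) := x * y * x⁻¹ * y⁻¹

/-- Relators of the group `H` from Theorem 3.6 (union of the 4-point quartic degeneration
and a plane). -/
def rels : Set (FreeGroup (Fin 5)) :=
  { (g 0) ^ 2, (g 1) ^ 2, (g 2) ^ 2, (g 3) ^ 2, (g 4) ^ 2,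
    (g 1 * g 0 * (g 1)⁻¹) * (g 3 * g 2 * (g 3)⁻¹)⁻¹,
    braid (g 0) (g 1), braid (g 1) (g 3), braid (g 2) (g 3),
    braid (g 2) (g 4), braid (g 3) (g 4),
    comm (g 0) (g 4), comm (g 1) (g 2), comm (g 1) (g 4),
    comm ((g 1) ^ 2 * g 0 * (g 1)⁻¹ ^ 2) (g 3),
    comm ((g 1) ^ 2 * g 0 * (g 1)⁻¹ ^ 2) ((g 2)⁻¹ ^ 2 * g 3 * (g 2) ^ 2),
    g 4 * (g 3) ^ 2 * g 4 * (g 2) ^ 2 * (g 1) ^ 2 * (g 0) ^ 2 }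

/-- The presented group `H`. -/
abbrev H := PresentedGroup rels

open Set Equiv
open scoped Nat

section TypeA

variable {G : Type*} [Group G]

structure SatisfiesTypeARelations (s : ℕ → G) (n : ℕ) : Prop where
  mul_self : ∀ i < n, s i * s i = 1
  braid : ∀ i, i + 1 < n → s i * s (i + 1) * s i = s (i + 1) * s i * s (i + 1)
  commute : ∀ i j, i + 1 < j → j < n → Commute (s i) (s j)

def descProd (s : ℕ → G) (j : ℕ) : ℕ → G
  | 0 => 1
  | l + 1 => s (j + l) * descProd s j l

variable {s : ℕ → G} {n : ℕ}

theorem descProd_succ' (j l : ℕ) : descProd s j (l + 1) = descProd s (j + 1) l * s j := by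
  induction l with
  | zero => simp [descProd]
  | succ l ih =>
    rw [descProd, ih, descProd, ← mul_assoc, show j + 1 + l = j + (l + 1) by omega]

namespace SatisfiesTypeARelations

theorem commute_descProd_of_add_one_lt (hs : SatisfiesTypeARelations s n) {i j l : ℕ}
    (hij : i + 1 < j) (hl : j + l ≤ n) : Commute (s i) (descProd s j l) := by
  induction l with
  | zero => exact Commute.one_right _
  | succ l ih => exact (hs.commute i (j + l) (by omega) (by omega)).mul_right (ih (by omega))

theorem commute_descProd_of_lt (hs : SatisfiesTypeARelations s n) {i j l : ℕ} (hl : j + l < i)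
    (hi : i < n) : Commute (s i) (descProd s j l) := by
  induction l with
  | zero => exact Commute.one_right _
  | succ l ih => exact (hs.commute (j + l) i (by omega) hi).symm.mul_right (ih (by omega))

theorem descProd_mul_succ (hs : SatisfiesTypeARelations s n) {i j l : ℕ} (hji : j ≤ i)
    (hil : i + 1 < j + l) (hl : j + l ≤ n) :
    descProd s j l * s (i + 1) = s i * descProd s j l := by
  induction l with
  | zero => omega
  | succ l ih =>
    rcases Nat.lt_or_ge (i + 1) (j + l) with hi | hi
    · rw [descProd, mul_assoc, ih hi (by omega), ← mul_assoc, ← mul_assoc,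
        (hs.commute i (j + l) (by omega) (by omega)).eq]
    · obtain ⟨m, rfl⟩ : ∃ m, l = m + 1 := ⟨l - 1, by omega⟩
      obtain rfl : i = j + m := by omega
      have hc := (hs.commute_descProd_of_lt (l := m) (lt_add_one (j + m)) (by omega)).eq
      calc s (j + m + 1) * (s (j + m) * descProd s j m) * s (j + m + 1)
          = s (j + m + 1) * s (j + m) * s (j + m + 1) * descProd s j m := by
            simp only [mul_assoc, hc]
        _ = s (j + m) * (s (j + m + 1) * (s (j + m) * descProd s j m)) := by
            rw [← hs.braid (j + m) (by omega)]; simp only [mul_assoc]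

theorem exists_descProd_mul_eq (hs : SatisfiesTypeARelations s n) {i j k : ℕ} (hk : k < n)
    (hi : i ≤ k) (hj : j ≤ k + 1) : ∃ j' ≤ k + 1, ∃ t ∈ insert 1 (s '' Iio k),
      descProd s j (k + 1 - j) * s i = t * descProd s j' (k + 1 - j') := by
  obtain h | rfl | rfl | h : i + 1 < j ∨ j = i + 1 ∨ j = i ∨ j < i := by omega
  · exact ⟨j, hj, s i, mem_insert_of_mem _ ⟨i, mem_Iio.mpr (by omega), rfl⟩,
      (hs.commute_descProd_of_add_one_lt h (by omega)).eq.symm⟩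
  · refine ⟨i, by omega, 1, mem_insert _ _, ?_⟩
    rw [one_mul, show k + 1 - i = k + 1 - (i + 1) + 1 by omega, descProd_succ']
  · refine ⟨j + 1, by omega, 1, mem_insert _ _, ?_⟩
    rw [one_mul, show k + 1 - j = k + 1 - (j + 1) + 1 by omega, descProd_succ', mul_assoc,
      hs.mul_self j (by omega), mul_one]
  · obtain ⟨i, rfl⟩ : ∃ i', i = i' + 1 := ⟨i - 1, by omega⟩
    exact ⟨j, hj, s i, mem_insert_of_mem _ ⟨i, mem_Iio.mpr (by omega), rfl⟩,
      hs.descProd_mul_succ (by omega) (by omega) (by omega)⟩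

end SatisfiesTypeARelations

section NormalForms

variable [DecidableEq G]

def normalForms (s : ℕ → G) : ℕ → Finset G
  | 0 => {1}
  | k + 1 => (normalForms s k ×ˢ Finset.range (k + 2)).image
      fun p => p.1 * descProd s p.2 (k + 1 - p.2)

theorem card_normalForms_le (k : ℕ) : (normalForms s k).card ≤ (k + 1)! := by
  induction k with
  | zero => simp [normalForms]
  | succ k ih =>
    calc (normalForms s (k + 1)).card ≤ (normalForms s k).card * (k + 2) := by
          rw [normalForms]
          exact Finset.card_image_le.trans (by rw [Finset.card_product, Finset.card_range])
      _ ≤ (k + 1)! * (k + 2) := Nat.mul_le_mul_right _ ih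
      _ = (k + 2)! := by rw [Nat.factorial_succ (k + 1), mul_comm]

theorem one_mem_normalForms (k : ℕ) : 1 ∈ normalForms s k := by
  cases k with
  | zero => exact Finset.mem_singleton_self 1
  | succ k =>
    exact Finset.mem_image.mpr ⟨(1, k + 1), Finset.mem_product.mpr
      ⟨one_mem_normalForms k, Finset.self_mem_range_succ _⟩, by simp [descProd]⟩

theorem SatisfiesTypeARelations.mul_mem_normalForms (hs : SatisfiesTypeARelations s n) {k : ℕ}
    (hk : k ≤ n) {w : G} (hw : w ∈ normalForms s k) {i : ℕ} (hi : i < k) :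
    w * s i ∈ normalForms s k := by
  induction k generalizing w i with
  | zero => omega
  | succ k ih =>
    obtain ⟨⟨v, j⟩, hvj, rfl⟩ := Finset.mem_image.mp hw
    obtain ⟨hv, hj⟩ := Finset.mem_product.mp hvj
    obtain ⟨j', hj', t, ht, he⟩ := hs.exists_descProd_mul_eq (i := i) (by omega) (by omega)
      (Nat.lt_succ_iff.mp (Finset.mem_range.mp hj))
    have hvt : v * t ∈ normalForms s k := by
      rcases ht with rfl | ⟨i', hi', rfl⟩
      · rwa [mul_one]
      · exact ih (by omega) hv hi'
    refine Finset.mem_image.mpr ⟨(v * t, j'), Finset.mem_product.mpr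
      ⟨hvt, Finset.mem_range.mpr (by omega)⟩, ?_⟩
    show v * t * descProd s j' (k + 1 - j') = v * descProd s j (k + 1 - j) * s i
    rw [mul_assoc, mul_assoc, he]

theorem SatisfiesTypeARelations.closure_subset_normalForms (hs : SatisfiesTypeARelations s n) :
    (Subgroup.closure (s '' Iio n) : Set G) ⊆ normalForms s n := by
  intro x hx
  induction hx using Subgroup.closure_induction_right with
  | one => exact one_mem_normalForms n
  | mul_right x _ y hy ih =>
    obtain ⟨i, hi, rfl⟩ := hy
    exact hs.mul_mem_normalForms le_rfl ih hi
  | mul_inv_cancel x _ y hy ih =>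
    obtain ⟨i, hi, rfl⟩ := hy
    rw [inv_eq_of_mul_eq_one_right (hs.mul_self i hi)]
    exact hs.mul_mem_normalForms le_rfl ih hi

end NormalForms

theorem SatisfiesTypeARelations.finite_and_card_le (hs : SatisfiesTypeARelations s n)
    (hgen : Subgroup.closure (s '' Iio n) = ⊤) : Finite G ∧ Nat.card G ≤ (n + 1)! := by
  classical
  have hsub : univ ⊆ (normalForms s n : Set G) := by
    simpa [hgen] using hs.closure_subset_normalForms
  refine ⟨finite_univ_iff.mp ((normalForms s n).finite_toSet.subset hsub), ?_⟩
  calc Nat.card G = (univ : Set G).ncard := (ncard_univ G).symm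
    _ ≤ (normalForms s n : Set G).ncard := ncard_le_ncard hsub (normalForms s n).finite_toSet
    _ = (normalForms s n).card := ncard_coe_finset _
    _ ≤ (n + 1)! := card_normalForms_le n

end TypeA

def γ (i : Fin 5) : H := PresentedGroup.of i

@[simp] theorem mk_g (i : Fin 5) : PresentedGroup.mk rels (g i) = γ i := rfl

theorem γ_sq (i : Fin 5) : γ i ^ 2 = 1 := by
  simpa using PresentedGroup.one_of_mem (show g i ^ 2 ∈ rels by fin_cases i <;> simp [rels])

theorem γ_mul_self (i : Fin 5) : γ i * γ i = 1 := by rw [← sq, γ_sq]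

theorem γ_inv (i : Fin 5) : (γ i)⁻¹ = γ i := inv_eq_of_mul_eq_one_right (γ_mul_self i)

theorem γ_braid {i j : Fin 5} (hr : braid (g i) (g j) ∈ rels) :
    γ i * γ j * γ i = γ j * γ i * γ j := by
  have h := PresentedGroup.one_of_mem hr
  simp only [braid, map_mul, map_inv, mk_g] at h
  exact mul_inv_eq_one.mp h

theorem γ_commute {i j : Fin 5} (hr : comm (g i) (g j) ∈ rels) : Commute (γ i) (γ j) := by
  have h := PresentedGroup.one_of_mem hr
  simp only [comm, map_mul, map_inv, mk_g] at h
  exact commutatorElement_eq_one_iff_commute.mp h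

theorem commute_γ_zero_three : Commute (γ 0) (γ 3) := by
  have h := PresentedGroup.one_of_mem (show comm (g 1 ^ 2 * g 0 * (g 1)⁻¹ ^ 2) (g 3) ∈ rels by
    simp [rels])
  simp only [comm, map_mul, map_inv, map_pow, mk_g, inv_pow, γ_sq, inv_one, one_mul, mul_one] at h
  exact commutatorElement_eq_one_iff_commute.mp h

theorem γ_two : γ 2 = γ 3 * γ 1 * γ 0 * γ 1 * γ 3 := by
  have h := PresentedGroup.one_of_mem
    (show g 1 * g 0 * (g 1)⁻¹ * (g 3 * g 2 * (g 3)⁻¹)⁻¹ ∈ rels by simp [rels])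
  simp only [map_mul, map_inv, mk_g, γ_inv, mul_inv_eq_one] at h
  rw [show γ 3 * γ 1 * γ 0 * γ 1 * γ 3 = γ 3 * (γ 1 * γ 0 * γ 1) * γ 3 by simp only [mul_assoc],
    h]
  simp only [← mul_assoc, γ_mul_self, one_mul]
  rw [mul_assoc, γ_mul_self, mul_one]

-- the Dynkin chain `g1 – g2 – g4 – g5`, in the paper's numbering
def chain : ℕ → Fin 5
  | 0 => 0
  | 1 => 1
  | 2 => 3
  | _ => 4

theorem satisfiesTypeARelations_chain : SatisfiesTypeARelations (fun i => γ (chain i)) 4 where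
  mul_self i _ := γ_mul_self _
  braid i hi := by
    obtain rfl | rfl | rfl : i = 0 ∨ i = 1 ∨ i = 2 := by omega
    all_goals exact γ_braid (by simp [rels, chain])
  commute i j hij hj := by
    obtain ⟨rfl, rfl⟩ | ⟨rfl, rfl⟩ | ⟨rfl, rfl⟩ :
      (i = 0 ∧ j = 2) ∨ (i = 0 ∧ j = 3) ∨ (i = 1 ∧ j = 3) := by omega
    exacts [commute_γ_zero_three, γ_commute (by simp [rels, chain]),
      γ_commute (by simp [rels, chain])]

theorem closure_chain_eq_top : Subgroup.closure ((fun i => γ (chain i)) '' Iio 4) = ⊤ := by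
  set K := Subgroup.closure ((fun i => γ (chain i)) '' Iio 4)
  have hK : ∀ i < 4, γ (chain i) ∈ K := fun i hi => Subgroup.subset_closure ⟨i, hi, rfl⟩
  refine eq_top_iff.mpr fun x _ => PresentedGroup.generated_by rels K (fun i => ?_) x
  fin_cases i
  · exact hK 0 (by norm_num)
  · exact hK 1 (by norm_num)
  · show γ 2 ∈ K
    rw [γ_two]
    exact K.mul_mem (K.mul_mem (K.mul_mem (K.mul_mem (hK 2 (by norm_num)) (hK 1 (by norm_num)))
      (hK 0 (by norm_num))) (hK 1 (by norm_num))) (hK 2 (by norm_num))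
  · exact hK 2 (by norm_num)
  · exact hK 3 (by norm_num)

def transposition : Fin 5 → Perm (Fin 5) :=
  ![swap 0 1, swap 1 2, swap 0 3, swap 2 3, swap 3 4]

theorem lift_transposition_rels : ∀ r ∈ rels, FreeGroup.lift transposition r = 1 := by
  simp only [rels, mem_insert_iff, mem_singleton_iff]
  rintro r (rfl | rfl | rfl | rfl | rfl | rfl | rfl | rfl | rfl | rfl | rfl | rfl | rfl | rfl |
    rfl | rfl | rfl) <;>
    simp only [g, braid, comm, map_mul, map_inv, map_pow, FreeGroup.lift_apply_of] <;> decide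

def toPerm : H →* Perm (Fin 5) := PresentedGroup.toGroup lift_transposition_rels

theorem toPerm_surjective : Function.Surjective toPerm := by
  rw [← MonoidHom.range_eq_top, eq_top_iff,
    ← Subgroup.closure_eq_top_of_mclosure_eq_top (Perm.mclosure_swap_castSucc_succ 4),
    Subgroup.closure_le]
  rintro _ ⟨i, rfl⟩
  refine ⟨γ (chain i), ?_⟩
  rw [γ, toPerm, PresentedGroup.toGroup.of]
  fin_cases i <;> rfl

/-- Theorem 3.6 (group-theoretic content): `H ≅ S₅`. -/
theorem H_iso_S5 : Nonempty (H ≃* Equiv.Perm (Fin 5)) := by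
  obtain ⟨hfin, hcard⟩ := satisfiesTypeARelations_chain.finite_and_card_le closure_chain_eq_top
  have hcard' : Nat.card H ≤ Nat.card (Perm (Fin 5)) := by
    rwa [Nat.card_perm, Nat.card_fin]
  exact ⟨MulEquiv.ofBijective toPerm (toPerm_surjective.bijective_of_nat_card_le hcard')⟩

end Stmt10
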